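/- Let S₀ ⊆ S be linear subspaces of ℝ^p and let f : ℝ^s → ℝ be a Borel function with f∘Y P-integrable. If E[f∘Y | σ(X)] = E[f∘Y | σ(P_{S₀}∘X)] P-almost everywhere, then E[f∘Y | σ(P_S∘X)] = E[f∘Y | σ(X)] P-almost everywhere; that is, any subspace containing a mean dimension reduction subspace for f is itself a mean dimension reduction subspace for f. -/

import Mathlib

open MeasureTheory ProbabilityTheory Filter

/-- The map `x ↦ P_S x`, the orthogonal projection onto `S` viewed as a map of the
ambient Euclidean space. -/
noncomputable def projFn {p : ℕ} (S : Submodule ℝ (EuclideanSpace ℝ (Fin p))) :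
    EuclideanSpace ℝ (Fin p) → EuclideanSpace ℝ (Fin p) :=
  fun v => (S.orthogonalProjectionOnto v : EuclideanSpace ℝ (Fin p))

/-- The σ-algebra `σ(P_S ∘ X)` generated by the projected random vector. -/
noncomputable def sigmaProj {Ω : Type*} {p : ℕ}
    (S : Submodule ℝ (EuclideanSpace ℝ (Fin p))) (X : Ω → EuclideanSpace ℝ (Fin p)) :
    MeasurableSpace Ω :=
  MeasurableSpace.comap (fun ω => projFn S (X ω)) inferInstance

lemma sigmaProj_le {Ω : Type*} {p : ℕ} [mΩ : MeasurableSpace Ω]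
    (S : Submodule ℝ (EuclideanSpace ℝ (Fin p))) {X : Ω → EuclideanSpace ℝ (Fin p)}
    (hX : Measurable X) : sigmaProj S X ≤ mΩ := by
  have h : Measurable (fun ω => projFn S (X ω)) := by
    have : Measurable (projFn S) :=
      (S.subtypeL.comp S.orthogonalProjectionOnto).continuous.measurable
    exact this.comp hX
  exact h.comap_le

/-! Since `S₀ ≤ S` we have `P_{S₀} = P_{S₀} ∘ P_S`, hence `σ(P_{S₀} ∘ X) ≤ σ(P_S ∘ X) ≤ σ(X)`.
By hypothesis `E[f∘Y | σ(X)]` is `σ(P_{S₀} ∘ X)`-measurable, so conditioning it on the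
intermediate σ-algebra `σ(P_S ∘ X)` leaves it unchanged, while by the tower property that
conditioning also gives `E[f∘Y | σ(P_S ∘ X)]`. -/

namespace MeasureTheory

variable {α E : Type*} [NormedAddCommGroup E] [NormedSpace ℝ E] [CompleteSpace E]
  {m₀ m₁ m₂ m : MeasurableSpace α} {μ : Measure α} {f : α → E}

theorem condExp_ae_eq_of_le_of_condExp_ae_eq (h₀₁ : m₀ ≤ m₁) (h₁₂ : m₁ ≤ m₂) (hm₂ : m₂ ≤ m)
    [SigmaFinite (μ.trim ((h₀₁.trans h₁₂).trans hm₂))] (h : μ[f|m₂] =ᵐ[μ] μ[f|m₀]) :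
    μ[f|m₁] =ᵐ[μ] μ[f|m₂] := by
  have : SigmaFinite (μ.trim (h₁₂.trans hm₂)) := sigmaFiniteTrim_mono _ h₀₁
  have : SigmaFinite (μ.trim hm₂) := sigmaFiniteTrim_mono _ (h₀₁.trans h₁₂)
  have h_meas : μ[μ[f|m₀]|m₁] = μ[f|m₀] :=
    condExp_of_stronglyMeasurable (h₁₂.trans hm₂) (stronglyMeasurable_condExp.mono h₀₁)
      integrable_condExp
  calc μ[f|m₁] =ᵐ[μ] μ[μ[f|m₂]|m₁] := (condExp_condExp_of_le h₁₂ hm₂).symm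
    _ =ᵐ[μ] μ[μ[f|m₀]|m₁] := condExp_congr_ae h
    _ = μ[f|m₀] := h_meas
    _ =ᵐ[μ] μ[f|m₂] := h.symm

end MeasureTheory

open MeasureTheory

section Projection

variable {Ω : Type*} {p : ℕ}

theorem projFn_eq_starProjection (S : Submodule ℝ (EuclideanSpace ℝ (Fin p))) :
    projFn S = S.starProjection :=
  rfl

theorem measurable_projFn (S : Submodule ℝ (EuclideanSpace ℝ (Fin p))) :
    Measurable (projFn S) :=
  S.starProjection.continuous.measurable

theorem projFn_comp_projFn_of_le {S₀ S : Submodule ℝ (EuclideanSpace ℝ (Fin p))} (h : S₀ ≤ S) :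
    projFn S₀ ∘ projFn S = projFn S₀ := by
  simp only [projFn_eq_starProjection, ← ContinuousLinearMap.coe_comp,
    Submodule.starProjection_comp_starProjection_of_le h]

theorem sigmaProj_le_comap (S : Submodule ℝ (EuclideanSpace ℝ (Fin p)))
    (X : Ω → EuclideanSpace ℝ (Fin p)) : sigmaProj S X ≤ MeasurableSpace.comap X inferInstance :=
  ((measurable_projFn S).comp (comap_measurable X)).comap_le

theorem sigmaProj_mono {S₀ S : Submodule ℝ (EuclideanSpace ℝ (Fin p))} (h : S₀ ≤ S)
    (X : Ω → EuclideanSpace ℝ (Fin p)) : sigmaProj S₀ X ≤ sigmaProj S X := by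
  have h_factor : (fun ω => projFn S₀ (X ω)) = projFn S₀ ∘ fun ω => projFn S (X ω) :=
    funext fun ω => (congrFun (projFn_comp_projFn_of_le h) (X ω)).symm
  rw [sigmaProj, h_factor]
  exact ((measurable_projFn S₀).comp (comap_measurable _)).comap_le

end Projection

theorem isMeanDRS_of_le_general
    {Ω : Type*} {p s : ℕ} [mΩ : MeasurableSpace Ω] (P : Measure Ω) [IsProbabilityMeasure P]
    (X : Ω → EuclideanSpace ℝ (Fin p)) (Y : Ω → EuclideanSpace ℝ (Fin s))
    (hX : Measurable X)
    (S₀ S : Submodule ℝ (EuclideanSpace ℝ (Fin p))) (hle : S₀ ≤ S)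
    (f : EuclideanSpace ℝ (Fin s) → ℝ)
    (h0 : P[(fun ω => f (Y ω))|MeasurableSpace.comap X inferInstance]
      =ᵐ[P] P[(fun ω => f (Y ω))|sigmaProj S₀ X]) :
    P[(fun ω => f (Y ω))|sigmaProj S X]
      =ᵐ[P] P[(fun ω => f (Y ω))|MeasurableSpace.comap X inferInstance] :=
  have : IsFiniteMeasure (P.trim (sigmaProj_le S₀ hX)) := isFiniteMeasure_trim _
  condExp_ae_eq_of_le_of_condExp_ae_eq (sigmaProj_mono hle X) (sigmaProj_le_comap S X)
    hX.comap_le h0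

/-- Any subspace containing a mean dimension reduction subspace for `f` is itself a mean
dimension reduction subspace for `f`. -/
theorem isMeanDRS_of_le
    {Ω : Type*} {p s : ℕ} [mΩ : MeasurableSpace Ω] (P : Measure Ω) [IsProbabilityMeasure P]
    (X : Ω → EuclideanSpace ℝ (Fin p)) (Y : Ω → EuclideanSpace ℝ (Fin s))
    (hX : Measurable X) (hY : Measurable Y)
    (S₀ S : Submodule ℝ (EuclideanSpace ℝ (Fin p))) (hle : S₀ ≤ S)
    (f : EuclideanSpace ℝ (Fin s) → ℝ) (hf : Measurable f)
    (hint : Integrable (fun ω => f (Y ω)) P)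
    (h0 : P[(fun ω => f (Y ω))|MeasurableSpace.comap X inferInstance]
      =ᵐ[P] P[(fun ω => f (Y ω))|sigmaProj S₀ X]) :
    P[(fun ω => f (Y ω))|sigmaProj S X]
      =ᵐ[P] P[(fun ω => f (Y ω))|MeasurableSpace.comap X inferInstance] :=
  isMeanDRS_of_le_general (mΩ := mΩ) P X Y hX S₀ S hle f h0
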